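/- Let (Γ_Qual, Γ_Forb) be an access structure on Fin n. If there exists an XVCS for (Γ_Qual, Γ_Forb) with pixel expansion m and perfect white pixel reconstruction, then there exists an SXVCS for (Γ_Qual, Γ_Forb) with pixel expansion m and perfect white pixel reconstruction. -/
import Mathlib


open scoped Classical

noncomputable section

/-- Hamming weight of a vector over `ZMod 2`. -/
def wt {m : ℕ} (v : Fin m → ZMod 2) : ℕ :=
  (Finset.univ.filter fun j => v j = 1).card

/-- `⊕M[Q]` : XOR (sum over `ZMod 2`) of the rows of `M` with index in `Q`. -/
def xorRows {n m : ℕ} (M : Matrix (Fin n) (Fin m) (ZMod 2)) (Q : Finset (Fin n)) :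
    Fin m → ZMod 2 :=
  fun j => ∑ i ∈ Q, M i j

/-- `M[F]` : restriction of `M` to the rows with index in `F`. -/
def rowRestrict {n m : ℕ} (F : Finset (Fin n)) (M : Matrix (Fin n) (Fin m) (ZMod 2)) :
    {x // x ∈ F} → Fin m → ZMod 2 :=
  fun i j => M i.1 j

/-- An access structure: a nonempty family of nonempty subsets of `Fin n`. -/
def IsAccessStructure {n : ℕ} (ΓQual : Finset (Finset (Fin n))) : Prop :=
  ΓQual.Nonempty ∧ ∀ Q ∈ ΓQual, Q.Nonempty

/-- `Γ⁻` : minimal elements of `ΓQual` under inclusion. -/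
def minQual {n : ℕ} (ΓQual : Finset (Finset (Fin n))) : Finset (Finset (Fin n)) :=
  ΓQual.filter fun Q => ∀ Q' ∈ ΓQual, Q' ⊆ Q → Q' = Q

/-- `Γ_Forb` : sets containing no minimal qualified set. -/
def Forb {n : ℕ} (ΓQual : Finset (Finset (Fin n))) (F : Finset (Fin n)) : Prop :=
  ∀ Q ∈ minQual ΓQual, ¬ Q ⊆ F

/-- XVCS: contrast + security (same matrices with same frequencies, after
normalizing by the cardinalities). -/
def XVCS {n m : ℕ} (ΓQual : Finset (Finset (Fin n)))
    (C0 C1 : Multiset (Matrix (Fin n) (Fin m) (ZMod 2))) : Prop :=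
  C0 ≠ 0 ∧ C1 ≠ 0 ∧
  (∀ Q ∈ ΓQual, ∀ M0 ∈ C0, ∀ M1 ∈ C1, wt (xorRows M0 Q) < wt (xorRows M1 Q)) ∧
  ∀ F : Finset (Fin n), Forb ΓQual F →
    ∀ D : {x // x ∈ F} → Fin m → ZMod 2,
      Multiset.card C1 * (C0.map (rowRestrict F)).count D
        = Multiset.card C0 * (C1.map (rowRestrict F)).count D

/-- Static contrast condition of an SXVCS. -/
def StaticContrast {n m : ℕ} (ΓQual : Finset (Finset (Fin n)))
    (C0 C1 : Multiset (Matrix (Fin n) (Fin m) (ZMod 2))) : Prop :=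
  ∀ Q ∈ ΓQual, ∃ E0 E1 : Fin m → ZMod 2,
    (∀ M ∈ C0, xorRows M Q = E0) ∧ (∀ M ∈ C1, xorRows M Q = E1) ∧ wt E0 < wt E1

/-- SXVCS : an XVCS satisfying the static contrast condition. -/
def SXVCS {n m : ℕ} (ΓQual : Finset (Finset (Fin n)))
    (C0 C1 : Multiset (Matrix (Fin n) (Fin m) (ZMod 2))) : Prop :=
  XVCS ΓQual C0 C1 ∧ StaticContrast ΓQual C0 C1

/-- Perfect white pixel reconstruction. -/
def PerfectWhite {n m : ℕ} (ΓQual : Finset (Finset (Fin n)))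
    (C0 : Multiset (Matrix (Fin n) (Fin m) (ZMod 2))) : Prop :=
  ∀ Q ∈ ΓQual, ∀ M ∈ C0, xorRows M Q = 0

/-- Average contrast of a scheme. -/
def avgContrast {n m : ℕ} (ΓQual : Finset (Finset (Fin n)))
    (C0 C1 : Multiset (Matrix (Fin n) (Fin m) (ZMod 2))) : ℚ :=
  (∑ Q ∈ ΓQual,
      ((C1.map fun M => (wt (xorRows M Q) : ℚ)).sum / (Multiset.card C1 : ℚ)
        - (C0.map fun M => (wt (xorRows M Q) : ℚ)).sum / (Multiset.card C0 : ℚ)) / (m : ℚ))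
    / (ΓQual.card : ℚ)

/-- PXVCS : probabilistic contrast condition + security. -/
def PXVCS {n m : ℕ} (ΓQual : Finset (Finset (Fin n)))
    (C0 C1 : Multiset (Matrix (Fin n) (Fin m) (ZMod 2))) : Prop :=
  C0 ≠ 0 ∧ C1 ≠ 0 ∧
  (∀ Q ∈ ΓQual,
    (C0.map fun M => (wt (xorRows M Q) : ℚ)).sum / (Multiset.card C0 : ℚ)
      < (C1.map fun M => (wt (xorRows M Q) : ℚ)).sum / (Multiset.card C1 : ℚ)) ∧
  ∀ F : Finset (Fin n), Forb ΓQual F →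
    ∀ D : {x // x ∈ F} → Fin m → ZMod 2,
      Multiset.card C1 * (C0.map (rowRestrict F)).count D
        = Multiset.card C0 * (C1.map (rowRestrict F)).count D

/-- Qualified matrix of an enumeration `Q : Fin t → Finset (Fin n)` of `ΓQual`. -/
def qualMatrix {t n : ℕ} (Q : Fin t → Finset (Fin n)) : Matrix (Fin t) (Fin n) (ZMod 2) :=
  fun k i => if i ∈ Q k then 1 else 0

/-- Solution set of `G * X = B` as a multiset (each solution once). -/
def solMS {t n m : ℕ} (G : Matrix (Fin t) (Fin n) (ZMod 2))
    (B : Matrix (Fin t) (Fin m) (ZMod 2)) : Multiset (Matrix (Fin n) (Fin m) (ZMod 2)) :=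
  (Finset.univ.filter fun X : Matrix (Fin n) (Fin m) (ZMod 2) => G * X = B).val

/-- Symmetric difference of a family: points in an odd number of members. -/
def symmDiffFam {n : ℕ} (S : Finset (Finset (Fin n))) : Finset (Fin n) :=
  Finset.univ.filter fun i => Odd (S.filter fun A => i ∈ A).card

/-- The `(k,n)` threshold qualified family. -/
def qualK (n k : ℕ) : Finset (Finset (Fin n)) :=
  Finset.univ.filter fun Q : Finset (Fin n) => Q.card = k

lemma mul_qualMatrix_apply {t n m : ℕ} (Qf : Fin t → Finset (Fin n))
    (X : Matrix (Fin n) (Fin m) (ZMod 2)) (k : Fin t) (j : Fin m) :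
    (qualMatrix Qf * X) k j = xorRows X (Qf k) j := by
  simp [Matrix.mul_apply, qualMatrix, xorRows, ite_mul]

lemma mem_solMS {t n m : ℕ} (G : Matrix (Fin t) (Fin n) (ZMod 2))
    (B : Matrix (Fin t) (Fin m) (ZMod 2)) (X : Matrix (Fin n) (Fin m) (ZMod 2)) :
    X ∈ solMS G B ↔ G * X = B := by
  simp [solMS]

lemma solMS_nodup {t n m : ℕ} (G : Matrix (Fin t) (Fin n) (ZMod 2))
    (B : Matrix (Fin t) (Fin m) (ZMod 2)) : (solMS G B).Nodup :=
  (Finset.univ.filter fun X : Matrix (Fin n) (Fin m) (ZMod 2) => G * X = B).nodup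

lemma solMS_shift' {t n m : ℕ} (G : Matrix (Fin t) (Fin n) (ZMod 2))
    (B : Matrix (Fin t) (Fin m) (ZMod 2)) (Y : Matrix (Fin n) (Fin m) (ZMod 2))
    (hY : G * Y = B) :
    (solMS G (0 : Matrix (Fin t) (Fin m) (ZMod 2))).map (fun X => X + Y) = solMS G B := by
  refine (Multiset.Nodup.ext (Multiset.Nodup.map (add_left_injective Y) (solMS_nodup G 0))
    (solMS_nodup G B)).mpr ?_
  intro Z
  simp only [Multiset.mem_map, mem_solMS]
  constructor
  · rintro ⟨X, hX, rfl⟩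
    rw [Matrix.mul_add, hX, hY, zero_add]
  · intro hZ
    refine ⟨Z - Y, ?_, by abel⟩
    rw [Matrix.mul_sub, hZ, hY, sub_self]

lemma wt_zero {m : ℕ} : wt (0 : Fin m → ZMod 2) = 0 := by
  simp [wt]

/-- an XVCS with perfect white pixel reconstruction yields an
SXVCS with the same pixel expansion and perfect white pixel reconstruction. -/
theorem stmt9 {n m : ℕ} (ΓQual : Finset (Finset (Fin n)))
    (hA : IsAccessStructure ΓQual)
    (h : ∃ C0 C1 : Multiset (Matrix (Fin n) (Fin m) (ZMod 2)),
      XVCS ΓQual C0 C1 ∧ PerfectWhite ΓQual C0) :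
    ∃ C0 C1 : Multiset (Matrix (Fin n) (Fin m) (ZMod 2)),
      SXVCS ΓQual C0 C1 ∧ PerfectWhite ΓQual C0 := by
  obtain ⟨C0, C1, ⟨h0, h1, hcon, hsec⟩, hpw⟩ := h
  obtain ⟨M0, hM0⟩ := Multiset.exists_mem_of_ne_zero h0
  obtain ⟨M1, hM1⟩ := Multiset.exists_mem_of_ne_zero h1
  set e := ΓQual.equivFin with he
  set Qf : Fin ΓQual.card → Finset (Fin n) := fun k => (e.symm k : Finset (Fin n)) with hQf
  have hQfmem : ∀ k, Qf k ∈ ΓQual := fun k => (e.symm k).2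
  set G := qualMatrix Qf with hG
  set B := G * M1 with hB
  -- every matrix of C0 is a solution of G X = 0
  have hG0 : ∀ M ∈ C0, G * M = 0 := by
    intro M hM
    ext k j
    rw [hG, mul_qualMatrix_apply, hpw (Qf k) (hQfmem k) M hM]
    rfl
  -- solutions of G X = B have the same xor rows as M1 on every qualified set
  have hGB : ∀ Q, ∀ hQ : Q ∈ ΓQual, ∀ X, G * X = B → xorRows X Q = xorRows M1 Q := by
    intro Q hQ X hX
    have hk : Qf (e ⟨Q, hQ⟩) = Q := by simp [hQf]
    funext j
    calc xorRows X Q j = (G * X) (e ⟨Q, hQ⟩) j := by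
          rw [hG, mul_qualMatrix_apply, hk]
      _ = B (e ⟨Q, hQ⟩) j := by rw [hX]
      _ = xorRows M1 Q j := by rw [hB, hG, mul_qualMatrix_apply, hk]
  -- solutions of G X = 0 have zero xor rows on every qualified set
  have hGZ : ∀ Q, Q ∈ ΓQual → ∀ X : Matrix (Fin n) (Fin m) (ZMod 2), G * X = 0 → xorRows X Q = 0 := by
    intro Q hQ X hX
    have hk : Qf (e ⟨Q, hQ⟩) = Q := by simp [hQf]
    funext j
    calc xorRows X Q j = (G * X) (e ⟨Q, hQ⟩) j := by
          rw [hG, mul_qualMatrix_apply, hk]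
      _ = 0 := by rw [hX]; rfl
  have hwpos : ∀ Q ∈ ΓQual, 0 < wt (xorRows M1 Q) := by
    intro Q hQ
    have := hcon Q hQ M0 hM0 M1 hM1
    rwa [hpw Q hQ M0 hM0, wt_zero] at this
  refine ⟨solMS G 0, solMS G B, ⟨⟨?_, ?_, ?_, ?_⟩, ?_⟩, ?_⟩
  · -- C0' ≠ 0
    intro hzero
    have : M0 ∈ solMS G 0 := (mem_solMS G 0 M0).mpr (hG0 M0 hM0)
    rw [hzero] at this
    exact absurd this (Multiset.notMem_zero M0)
  · -- C1' ≠ 0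
    intro hzero
    have : M1 ∈ solMS G B := (mem_solMS G B M1).mpr hB.symm
    rw [hzero] at this
    exact absurd this (Multiset.notMem_zero M1)
  · -- contrast
    intro Q hQ X0 hX0 X1 hX1
    rw [hGZ Q hQ X0 ((mem_solMS G 0 X0).mp hX0),
      hGB Q hQ X1 ((mem_solMS G B X1).mp hX1), wt_zero]
    exact hwpos Q hQ
  · -- security
    intro F hF D
    -- find M0F ∈ C0 agreeing with M1 on F
    have hcount1 : 0 < (C1.map (rowRestrict F)).count (rowRestrict F M1) :=
      Multiset.count_pos.mpr (Multiset.mem_map_of_mem _ hM1)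
    have hcard0 : 0 < Multiset.card C0 := Multiset.card_pos.mpr h0
    have hsecF := hsec F hF (rowRestrict F M1)
    have hcount0 : 0 < (C0.map (rowRestrict F)).count (rowRestrict F M1) := by
      refine Nat.pos_of_ne_zero fun hc => ?_
      rw [hc, mul_zero] at hsecF
      exact (Nat.mul_pos hcard0 hcount1).ne' hsecF.symm
    obtain ⟨M0F, hM0F, hMeq⟩ := Multiset.mem_map.mp (Multiset.count_pos.mp hcount0)
    -- the shift Y vanishes on F and maps solutions of G X = 0 to those of G X = B
    set Y := M1 - M0F with hY
    have hGY : G * Y = B := by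
      rw [hY, Matrix.mul_sub, hG0 M0F hM0F, hB, sub_zero]
    have hYF : rowRestrict F Y = 0 := by
      funext i j
      have := congrFun (congrFun hMeq i) j
      simp only [rowRestrict, hY, Matrix.sub_apply, Pi.zero_apply]
      rw [show M0F i.1 j = M1 i.1 j from this, sub_self]
    have hshift := solMS_shift' G B Y hGY
    have hres : ∀ X : Matrix (Fin n) (Fin m) (ZMod 2),
        rowRestrict F (X + Y) = rowRestrict F X := by
      intro X
      funext i j
      have h0' : Y i.1 j = 0 := congrFun (congrFun hYF i) j
      simp [rowRestrict, h0']
    have hmapeq : (solMS G B).map (rowRestrict F)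
        = (solMS G (0 : Matrix (Fin ΓQual.card) (Fin m) (ZMod 2))).map (rowRestrict F) := by
      rw [← hshift, Multiset.map_map]
      exact Multiset.map_congr rfl (fun X _ => hres X)
    have hcards : Multiset.card (solMS G B)
        = Multiset.card (solMS G (0 : Matrix (Fin ΓQual.card) (Fin m) (ZMod 2))) := by
      rw [← hshift, Multiset.card_map]
    rw [hmapeq, hcards]
  · -- static contrast
    intro Q hQ
    refine ⟨0, xorRows M1 Q, ?_, ?_, ?_⟩
    · intro M hM
      exact hGZ Q hQ M ((mem_solMS G 0 M).mp hM)
    · intro M hM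
      exact hGB Q hQ M ((mem_solMS G B M).mp hM)
    · rw [wt_zero]; exact hwpos Q hQ
  · -- perfect white
    intro Q hQ M hM
    exact hGZ Q hQ M ((mem_solMS G 0 M).mp hM)
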